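/- For every integer m ≥ 2 and every integer k with 0 ≤ k ≤ m−1, D(m,k+1) ≥ D(m,k), where D(m,k) is defined in the context. (In words: for the split attack against uniformly distributed adversaries, the expected advantage of truthful bidding over the attack is monotone nondecreasing in the number k of one-item-demand adversaries.) -/

import Mathlib

open intervalIntegral

/-- Truthful minus split-attack utility of a bidder of true type (2,1) submitting the
false-name bids (1,1),(1,1), when the two highest one-item adversary per-item values are
`a ≥ b` and the highest two-item adversary per-item value is `w`. -/
noncomputable def delta (w a b : ℝ) : ℝ :=
  if w ≤ (a + b) / 2 then a - b
  else if w ≤ (1 + a) / 2 then 2 * a - 2 * w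
  else 2 * w - 2

/-- Expected value of `delta` for `m` adversaries with i.i.d. uniform per-item values on
[0,1], of which `k` demand one item, with respect to the relevant order statistics. -/
noncomputable def D (m k : ℕ) : ℝ :=
  if k = 0 then
    m * ∫ w in (0:ℝ)..1, w ^ (m - 1) * delta w 0 0
  else if k = 1 then
    ((m : ℝ) - 1) * ∫ v in (0:ℝ)..1, ∫ w in (0:ℝ)..1, w ^ (m - 2) * delta w v 0
  else if k = m then
    (m : ℝ) * ((m : ℝ) - 1) *
      ∫ v₁ in (0:ℝ)..1, ∫ v₂ in (0:ℝ)..v₁, v₂ ^ (m - 2) * delta 0 v₁ v₂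
  else
    (k : ℝ) * ((k : ℝ) - 1) * ((m : ℝ) - k) *
      ∫ v₁ in (0:ℝ)..1, ∫ v₂ in (0:ℝ)..v₁, ∫ w in (0:ℝ)..1,
        v₂ ^ (k - 2) * w ^ (m - k - 1) * delta w v₁ v₂


/-!
After integrating out `w` (for fixed `a ≥ b`, `delta · a b` is piecewise linear with kinks at
`(a + b) / 2` and `(1 + a) / 2`), the substitution `v₂ = v₁ v` expresses every `D m k` through
the moments `J p q = ∫₀¹ v ^ p ((1 + v) / 2) ^ q dv`. Integration by parts gives the recurrence
`(p + 1) J p q + (p + q + 2) J (p + 1) q = 2`, which collapses the formula to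
`D m k = 4 / (m + 1) - 3 J k (m - k)` for `2 ≤ k ≤ m`; from there on monotonicity in `k` is
`J (k + 1) q ≤ J k (q + 1)`, i.e. `v ≤ (1 + v) / 2`. The first two steps are explicit:
`D m 0 ≤ D m 1` amounts to `m + 3 ≤ 3 · 2 ^ m`, and `D m 1 ≤ D m 2` to
`J 0 (m - 2) ≤ 1 + 2 ^ (-m)`.
-/

open Set

lemma delta_eq_hinge {a b : ℝ} (hb : b ≤ 1) (w : ℝ) :
    delta w a b = (a - b) - 2 * max (w - (a + b) / 2) 0 + 4 * max (w - (1 + a) / 2) 0 := by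
  unfold delta
  split_ifs with h₁ h₂
  · rw [max_eq_right (by linarith), max_eq_right (by linarith)]; ring
  · rw [max_eq_left (by linarith), max_eq_right (by linarith)]; ring
  · rw [max_eq_left (by linarith), max_eq_left (by linarith)]; ring

lemma integral_pow_mul_max_sub {c : ℝ} (hc₀ : 0 ≤ c) (hc₁ : c ≤ 1) (n : ℕ) :
    ∫ w in (0:ℝ)..1, w ^ n * max (w - c) 0
      = 1 / (n + 2) - c / (n + 1) + c ^ (n + 2) / ((n + 1) * (n + 2)) := by
  have below : ∫ w in (0:ℝ)..c, w ^ n * max (w - c) 0 = 0 := by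
    refine (integral_congr fun w hw => ?_).trans integral_zero
    rw [uIcc_of_le hc₀] at hw
    simp [max_eq_right (sub_nonpos.2 hw.2)]
  have above : ∫ w in c..1, w ^ n * max (w - c) 0 = ∫ w in c..1, (w ^ (n + 1) - c * w ^ n) := by
    refine integral_congr fun w hw => ?_
    rw [uIcc_of_le hc₁] at hw
    simp only [max_eq_left (sub_nonneg.2 hw.1), pow_succ]
    ring
  rw [← integral_add_adjacent_intervals, below, above, intervalIntegral.integral_sub,
    integral_const_mul, integral_pow, integral_pow]
  · push_cast
    field_simp
    ring
  all_goals exact Continuous.intervalIntegrable (by fun_prop) _ _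

lemma integral_pow_mul_delta (n : ℕ) {a b : ℝ} (hb : 0 ≤ b) (hba : b ≤ a) (ha : a ≤ 1) :
    ∫ w in (0:ℝ)..1, w ^ n * delta w a b
      = 2 / ((n + 1) * (n + 2)) * (2 * ((1 + a) / 2) ^ (n + 2) - ((a + b) / 2) ^ (n + 2) - 1) := by
  have hinge : (fun w => w ^ n * delta w a b) = fun w => (a - b) * w ^ n
      - 2 * (w ^ n * max (w - (a + b) / 2) 0) + 4 * (w ^ n * max (w - (1 + a) / 2) 0) := by
    funext w
    rw [delta_eq_hinge (hba.trans ha)]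
    ring
  rw [hinge, integral_add, intervalIntegral.integral_sub, integral_const_mul, integral_const_mul,
    integral_const_mul, integral_pow, integral_pow_mul_max_sub (by linarith) (by linarith),
    integral_pow_mul_max_sub (by linarith) (by linarith)]
  · field_simp
    ring
  all_goals exact Continuous.intervalIntegrable (by fun_prop) _ _

noncomputable def J (p q : ℕ) : ℝ := ∫ v in (0:ℝ)..1, v ^ p * ((1 + v) / 2) ^ q

lemma J_zero_right (p : ℕ) : J p 0 = 1 / (p + 1) := by
  simp [J]

lemma J_zero_left (q : ℕ) : J 0 q = 2 * (1 - (1 / 2) ^ (q + 1)) / (q + 1) := by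
  have h := integral_comp_div_add (fun x : ℝ => x ^ q) (a := 0) (b := 1) two_ne_zero (1 / 2)
  simp only [J, pow_zero, one_mul]
  rw [show (fun v : ℝ => ((1 + v) / 2) ^ q) = fun v => (v / 2 + 1 / 2) ^ q by
      funext v; ring, h, integral_pow]
  norm_num
  ring

lemma J_succ_right (p q : ℕ) : J p (q + 1) = (J p q + J (p + 1) q) / 2 := by
  simp only [J]
  rw [← intervalIntegral.integral_add, ← intervalIntegral.integral_div]
  · exact integral_congr fun v _ => by ring
  all_goals exact Continuous.intervalIntegrable (by fun_prop) _ _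

/-- Integration by parts against `d/dv (v ^ (p + 1) * ((1 + v) / 2) ^ (q + 1))`. -/
lemma J_parts (p q : ℕ) : (p + 1) * J p (q + 1) + (q + 1) / 2 * J (p + 1) q = 1 := by
  have hderiv (v : ℝ) : HasDerivAt (fun x : ℝ => x ^ (p + 1) * ((1 + x) / 2) ^ (q + 1))
      ((p + 1) * (v ^ p * ((1 + v) / 2) ^ (q + 1))
        + (q + 1) / 2 * (v ^ (p + 1) * ((1 + v) / 2) ^ q)) v := by
    have h := (hasDerivAt_pow (p + 1) v).fun_mul
      ((((hasDerivAt_id' v).const_add 1).div_const 2).fun_pow (q + 1))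
    refine h.congr_deriv ?_
    simp only [Nat.add_sub_cancel]
    push_cast
    ring
  have hFTC := integral_eq_sub_of_hasDerivAt (fun v _ => hderiv v)
    (Continuous.intervalIntegrable (by fun_prop) 0 1)
  rw [intervalIntegral.integral_add, integral_const_mul, integral_const_mul] at hFTC
  · simp only [J, hFTC]
    norm_num
  all_goals exact Continuous.intervalIntegrable (by fun_prop) _ _

lemma J_recurrence (p q : ℕ) : (p + 1) * J p q + (p + q + 2) * J (p + 1) q = 2 := by
  linear_combination 2 * J_parts p q - 2 * (p + 1) * J_succ_right p q

lemma J_zero_left_le_one (q : ℕ) : J 0 q ≤ 1 := by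
  calc J 0 q ≤ ∫ _ in (0:ℝ)..1, (1 : ℝ) := by
        refine integral_mono_on zero_le_one (Continuous.intervalIntegrable (by fun_prop) _ _)
          intervalIntegrable_const fun v hv => ?_
        rw [pow_zero, one_mul]
        exact pow_le_one₀ (by linarith [hv.1]) (by linarith [hv.2])
    _ = 1 := by simp

lemma J_succ_left_le_succ_right (p q : ℕ) : J (p + 1) q ≤ J p (q + 1) := by
  refine integral_mono_on zero_le_one (Continuous.intervalIntegrable (by fun_prop) _ _)
    (Continuous.intervalIntegrable (by fun_prop) _ _) fun v hv => ?_
  have hv₀ : 0 ≤ v := hv.1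
  calc v ^ (p + 1) * ((1 + v) / 2) ^ q = v ^ p * ((1 + v) / 2) ^ q * v := by ring
    _ ≤ v ^ p * ((1 + v) / 2) ^ q * ((1 + v) / 2) := by gcongr; linarith [hv.2]
    _ = v ^ p * ((1 + v) / 2) ^ (q + 1) := by ring

lemma integral_pow_mul_avg_pow (i N : ℕ) (t : ℝ) :
    ∫ x in (0:ℝ)..t, x ^ i * ((t + x) / 2) ^ N = t ^ (i + N + 1) * J i N := by
  have h := smul_integral_comp_mul_left (fun x => x ^ i * ((t + x) / 2) ^ N) t (a := 0) (b := 1)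
  rw [mul_zero, mul_one] at h
  rw [← h, smul_eq_mul, J, ← integral_const_mul, ← integral_const_mul]
  refine integral_congr fun x _ => ?_
  rw [show (t + t * x) / 2 = t * ((1 + x) / 2) by ring, mul_pow, mul_pow]
  ring

lemma D_zero (m : ℕ) : D m 0 = 2 / (m + 1) * ((1 / 2) ^ m - 1) := by
  rcases m with _ | n
  · simp [D]
  · simp only [D, if_pos, Nat.add_sub_cancel]
    rw [integral_pow_mul_delta n le_rfl le_rfl zero_le_one]
    push_cast
    field_simp
    ring

lemma D_one {m : ℕ} (hm : 2 ≤ m) : D m 1 = 2 / m * ((4 - 3 * (1 / 2) ^ m) / (m + 1) - 1) := by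
  obtain ⟨n, rfl⟩ : ∃ n, m = n + 2 := ⟨m - 2, by omega⟩
  simp only [D, one_ne_zero, if_false, if_true, Nat.add_sub_cancel]
  have inner : ∀ v ∈ uIcc (0:ℝ) 1, ∫ w in (0:ℝ)..1, w ^ n * delta w v 0
      = 2 / ((n + 1) * (n + 2)) * (2 * (v ^ 0 * ((1 + v) / 2) ^ (n + 2))
          - (1 / 2) ^ (n + 2) * v ^ (n + 2) - 1) := by
    intro v hv
    rw [uIcc_of_le zero_le_one] at hv
    rw [integral_pow_mul_delta n le_rfl hv.1 hv.2, add_zero, div_pow v,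
      div_eq_mul_one_div _ (2 ^ _), ← one_div_pow]
    ring
  rw [integral_congr inner, integral_const_mul, intervalIntegral.integral_sub,
    intervalIntegral.integral_sub, integral_const_mul, integral_const_mul, integral_pow,
    integral_one, ← J, J_zero_left]
  · push_cast
    field_simp
    ring
  all_goals exact Continuous.intervalIntegrable (by fun_prop) _ _

lemma D_self {m : ℕ} (hm : 2 ≤ m) : D m m = 1 / (m + 1) := by
  obtain ⟨n, rfl⟩ : ∃ n, m = n + 2 := ⟨m - 2, by omega⟩
  simp only [D, show n + 2 ≠ 0 by omega, show n + 2 ≠ 1 by omega, if_false, if_true,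
    Nat.add_sub_cancel]
  have inner : ∀ v₁ ∈ uIcc (0:ℝ) 1, ∫ v₂ in (0:ℝ)..v₁, v₂ ^ n * delta 0 v₁ v₂
      = v₁ ^ (n + 2) / ((n + 1) * (n + 2)) := by
    intro v₁ hv₁
    rw [uIcc_of_le zero_le_one] at hv₁
    have h : ∀ v₂ ∈ uIcc 0 v₁, v₂ ^ n * delta 0 v₁ v₂ = v₁ * v₂ ^ n - v₂ ^ (n + 1) := by
      intro v₂ hv₂
      rw [uIcc_of_le hv₁.1] at hv₂
      rw [delta, if_pos (by linarith [hv₂.1, hv₁.1]), pow_succ]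
      ring
    rw [integral_congr h, intervalIntegral.integral_sub, integral_const_mul, integral_pow,
      integral_pow]
    · rw [zero_pow (Nat.succ_ne_zero _), zero_pow (Nat.succ_ne_zero _)]
      push_cast
      field_simp
      ring
    all_goals exact Continuous.intervalIntegrable (by fun_prop) _ _
  rw [integral_congr inner, intervalIntegral.integral_div, integral_pow]
  push_cast
  field_simp
  ring

lemma D_interior (i n : ℕ) :
    D (i + n + 3) (i + 2) = 2 / (n + 2) * (2 * (i + 2) * J (i + 1) (n + 2)
      - (i + 2) * (i + 1) / (i + n + 4) * J i (n + 2) - 1) := by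
  simp only [D, show i + 2 ≠ 0 by omega, show i + 2 ≠ 1 by omega,
    show i + 2 ≠ i + n + 3 by omega, if_false, Nat.add_sub_cancel,
    show i + n + 3 - (i + 2) - 1 = n by omega]
  set c : ℝ := 2 / ((n + 1) * (n + 2))
  have inner : ∀ v₁ ∈ uIcc (0:ℝ) 1,
      ∫ v₂ in (0:ℝ)..v₁, ∫ w in (0:ℝ)..1, v₂ ^ i * w ^ n * delta w v₁ v₂
        = 2 * c / (i + 1) * (v₁ ^ (i + 1) * ((1 + v₁) / 2) ^ (n + 2))
          - c / (i + 1) * v₁ ^ (i + 1) - c * J i (n + 2) * v₁ ^ (i + n + 3) := by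
    intro v₁ hv₁
    rw [uIcc_of_le zero_le_one] at hv₁
    have h : ∀ v₂ ∈ uIcc 0 v₁, ∫ w in (0:ℝ)..1, v₂ ^ i * w ^ n * delta w v₁ v₂
        = c * (2 * ((1 + v₁) / 2) ^ (n + 2) - 1) * v₂ ^ i
          - c * (v₂ ^ i * ((v₁ + v₂) / 2) ^ (n + 2)) := by
      intro v₂ hv₂
      rw [uIcc_of_le hv₁.1] at hv₂
      simp_rw [mul_assoc (v₂ ^ i)]
      rw [integral_const_mul, integral_pow_mul_delta n hv₂.1 hv₂.2 hv₁.2]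
      ring
    rw [integral_congr h, intervalIntegral.integral_sub, integral_const_mul, integral_const_mul,
      integral_pow, integral_pow_mul_avg_pow]
    · rw [zero_pow (Nat.succ_ne_zero _)]
      field_simp
      ring
    all_goals exact Continuous.intervalIntegrable (by fun_prop) _ _
  rw [integral_congr inner, intervalIntegral.integral_sub, intervalIntegral.integral_sub,
    integral_const_mul, integral_const_mul, integral_const_mul, integral_pow, integral_pow, ← J]
  · simp only [c]
    push_cast
    field_simp
    ring
  all_goals exact Continuous.intervalIntegrable (by fun_prop) _ _

lemma D_eq_J {m k : ℕ} (hk : 2 ≤ k) (hkm : k ≤ m) :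
    D m k = 4 / (m + 1) - 3 * J k (m - k) := by
  rcases hkm.eq_or_lt with rfl | hlt
  · rw [D_self hk, Nat.sub_self, J_zero_right]
    ring
  obtain ⟨i, rfl⟩ : ∃ i, k = i + 2 := ⟨k - 2, by omega⟩
  obtain ⟨n, rfl⟩ : ∃ n, m = i + n + 3 := ⟨m - i - 3, by omega⟩
  have h₁ := J_recurrence i (n + 2)
  have h₂ := J_parts (i + 1) (n + 1)
  rw [D_interior, show i + n + 3 - (i + 2) = n + 1 by omega]
  push_cast at h₁ h₂ ⊢
  -- `h₁` eliminates `J i (n + 2)`, then `h₂` trades `J (i + 1) (n + 2)` for `J (i + 2) (n + 1)`.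
  linear_combination (norm := skip)
    (-2 * (i + 2) / ((n + 2) * (i + n + 4))) * h₁ + 6 / (n + 2) * h₂
  field_simp
  ring

lemma D_zero_le_D_one {m : ℕ} (hm : 2 ≤ m) : D m 0 ≤ D m 1 := by
  have hpow : (m : ℝ) + 1 ≤ 2 ^ m := by exact_mod_cast Nat.lt_two_pow_self
  have hdiff : D m 1 - D m 0 = 2 * (3 * 2 ^ m - (m + 3)) / (m * (m + 1) * 2 ^ m) := by
    rw [D_one hm, D_zero, one_div_pow]
    field_simp
    ring
  rw [← sub_nonneg, hdiff]
  exact div_nonneg (by linarith) (by positivity)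

lemma D_one_le_D_two {m : ℕ} (hm : 2 ≤ m) : D m 1 ≤ D m 2 := by
  obtain ⟨q, rfl⟩ : ∃ q, m = q + 2 := ⟨m - 2, by omega⟩
  have h₀ := J_recurrence 0 q
  have h₁ := J_recurrence 1 q
  have hdiff : D (q + 2) 2 - D (q + 2) 1
      = 6 * (1 + (1 / 2) ^ (q + 2) - J 0 q) / ((q + 2) * (q + 3)) := by
    rw [D_one hm, D_eq_J le_rfl hm, Nat.add_sub_cancel]
    push_cast at h₀ h₁ ⊢
    linear_combination (norm := skip) (-3 / (q + 3)) * h₁ + 6 / ((q + 2) * (q + 3)) * h₀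
    field_simp
    ring
  have hJ := J_zero_left_le_one q
  have hx : (0:ℝ) ≤ (1 / 2) ^ (q + 2) := by positivity
  rw [← sub_nonneg, hdiff]
  exact div_nonneg (by linarith) (by positivity)

lemma D_le_D_succ {m k : ℕ} (hk : 2 ≤ k) (hkm : k < m) : D m k ≤ D m (k + 1) := by
  have h := J_succ_left_le_succ_right k (m - (k + 1))
  rw [show m - (k + 1) + 1 = m - k by omega] at h
  rw [D_eq_J hk hkm.le, D_eq_J (by omega) hkm]
  linarith

theorem stmt_9 (m : ℕ) (hm : 2 ≤ m) (k : ℕ) (hk : k ≤ m - 1) :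
    D m (k + 1) ≥ D m k := by
  rcases k with _ | _ | k
  · exact D_zero_le_D_one hm
  · exact D_one_le_D_two hm
  · exact D_le_D_succ (by omega) (by omega)
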